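/- arXiv:2511.11455 — 3 statements merged into one kernel-verified Lean document; each statement's English description precedes it below -/
import Mathlib

section
/- Let ((c̄,b̄),x̄) be in the graph of the argmin mapping S and assume the Slater constraint qualification holds at b̄. Then lip S((c̄,b̄),x̄) ≥ lip S_D((c̄,b̄_D),x̄) for every D ∈ M_{c̄,b̄}(x̄) (as elements of [0,+∞]); in particular, lip S((c̄,b̄),x̄) ≥ max over D ∈ M_{c̄,b̄}(x̄) of lip S_D((c̄,b̄_D),x̄), and if S_D fails the Aubin property at ((c̄,b̄_D),x̄) for some D ∈ M_{c̄,b̄}(x̄), then S fails the Aubin property at ((c̄,b̄),x̄). -/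
open Matrix Set Topology Filter
open scoped ENNReal

namespace QPLip

variable {n m : ℕ}

/-- The quadratic objective function `(1/2) xᵀQx + cᵀx`. -/
noncomputable def obj (Q : Matrix (Fin n) (Fin n) ℝ) (c x : Fin n → ℝ) : ℝ :=
  (1 / 2) * (x ⬝ᵥ Q.mulVec x) + c ⬝ᵥ x

/-- The feasible set `F(b) = {x : aᵢ'x ≤ bᵢ, i = 1,…,m}`. -/
def Feas (A : Matrix (Fin m) (Fin n) ℝ) (b : Fin m → ℝ) : Set (Fin n → ℝ) :=
  {x | ∀ i, A i ⬝ᵥ x ≤ b i}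

/-- The argmin (optimal set) mapping `S(c,b)`. -/
noncomputable def argminSet (Q : Matrix (Fin n) (Fin n) ℝ) (A : Matrix (Fin m) (Fin n) ℝ)
    (c : Fin n → ℝ) (b : Fin m → ℝ) : Set (Fin n → ℝ) :=
  {x | x ∈ Feas A b ∧ ∀ y ∈ Feas A b, obj Q c x ≤ obj Q c y}

/-- The active index set `I_b(x)`. -/
def activeIdx (A : Matrix (Fin m) (Fin n) ℝ) (b : Fin m → ℝ) (x : Fin n → ℝ) : Set (Fin m) :=
  {i | A i ⬝ᵥ x = b i}

/-- Conical convex hull of `{aᵢ : i ∈ D}` (equal to `{0}` when `D = ∅`). -/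
def coneOf (A : Matrix (Fin m) (Fin n) ℝ) (D : Finset (Fin m)) : Set (Fin n → ℝ) :=
  {v | ∃ lam : Fin m → ℝ, (∀ i, 0 ≤ lam i) ∧ v = ∑ i ∈ D, lam i • A i}

/-- The family `M_{c,b}(x)` of minimal KKT sets of indices at `((c,b),x)`. -/
def MinKKT (Q : Matrix (Fin n) (Fin n) ℝ) (A : Matrix (Fin m) (Fin n) ℝ)
    (c : Fin n → ℝ) (b : Fin m → ℝ) (x : Fin n → ℝ) : Set (Finset (Fin m)) :=
  {D | ↑D ⊆ activeIdx A b x ∧ -(Q.mulVec x + c) ∈ coneOf A D ∧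
    ∀ D' : Finset (Fin m), D' ⊂ D → -(Q.mulVec x + c) ∉ coneOf A D'}

/-- The extended family `L_{c,b}(x)` of KKT subsets of indices. -/
def ExtKKT (Q : Matrix (Fin n) (Fin n) ℝ) (A : Matrix (Fin m) (Fin n) ℝ)
    (c : Fin n → ℝ) (b : Fin m → ℝ) (x : Fin n → ℝ) : Set (Finset (Fin m)) :=
  {D | ↑D ⊆ activeIdx A b x ∧ LinearIndependent ℝ (fun i : D => A i.1) ∧
    -(Q.mulVec x + c) ∈ coneOf A D}

/-- Slater constraint qualification at `b`. -/
def Slater (A : Matrix (Fin m) (Fin n) ℝ) (b : Fin m → ℝ) : Prop :=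
  ∃ y : Fin n → ℝ, ∀ i, A i ⬝ᵥ y < b i

/-- The Nürnberger condition at `((c,b),x)`. -/
def NCond (Q : Matrix (Fin n) (Fin n) ℝ) (A : Matrix (Fin m) (Fin n) ℝ)
    (c : Fin n → ℝ) (b : Fin m → ℝ) (x : Fin n → ℝ) : Prop :=
  Slater A b ∧ ∀ D : Finset (Fin m), ↑D ⊆ activeIdx A b x →
    -(Q.mulVec x + c) ∈ coneOf A D → n ≤ D.card

/-- The submatrix `A_D` of `A` formed by the rows indexed by `D`. -/
def subA (A : Matrix (Fin m) (Fin n) ℝ) (D : Finset (Fin m)) : Matrix D (Fin n) ℝ :=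
  Matrix.of fun i j => A i.1 j

/-- The KKT matrix `M_D = [[Q, A_Dᵀ],[A_D, 0]]`. -/
noncomputable def MD (Q : Matrix (Fin n) (Fin n) ℝ) (A : Matrix (Fin m) (Fin n) ℝ)
    (D : Finset (Fin m)) : Matrix (Fin n ⊕ D) (Fin n ⊕ D) ℝ :=
  Matrix.fromBlocks Q (subA A D)ᵀ (subA A D) 0

/-- The feasible set of the subproblem `P_D`. -/
def FeasD (A : Matrix (Fin m) (Fin n) ℝ) (D : Finset (Fin m)) (β : D → ℝ) :
    Set (Fin n → ℝ) :=
  {x | ∀ i : D, A i.1 ⬝ᵥ x ≤ β i}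

/-- The optimal set mapping `S_D(c,β)` of the subproblem `P_D(c,β)`. -/
noncomputable def argminD (Q : Matrix (Fin n) (Fin n) ℝ) (A : Matrix (Fin m) (Fin n) ℝ)
    (D : Finset (Fin m)) (c : Fin n → ℝ) (β : D → ℝ) : Set (Fin n → ℝ) :=
  {x | x ∈ FeasD A D β ∧ ∀ y ∈ FeasD A D β, obj Q c x ≤ obj Q c y}

/-- Restriction `b_D` of the right-hand side `b` to the indices in `D`. -/
def restr (b : Fin m → ℝ) (D : Finset (Fin m)) : D → ℝ := fun i => b i.1

/-- `nrm` is a norm on `ℝⁿ`. -/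
structure IsNorm (nrm : (Fin n → ℝ) → ℝ) : Prop where
  definite : ∀ x, nrm x = 0 → x = 0
  smul : ∀ (t : ℝ) (x : Fin n → ℝ), nrm (t • x) = |t| * nrm x
  triangle : ∀ x y, nrm (x + y) ≤ nrm x + nrm y

/-- The dual norm `‖c‖_* = sup {|c'y| : ‖y‖ ≤ 1}`. -/
noncomputable def dualNrm (nrm : (Fin n → ℝ) → ℝ) (c : Fin n → ℝ) : ℝ :=
  sSup {r | ∃ y, nrm y ≤ 1 ∧ r = |c ⬝ᵥ y|}

/-- Distance (with respect to the norm `nrm`) from a point to a set, with `d(x,∅) = +∞`. -/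
noncomputable def dSet (nrm : (Fin n → ℝ) → ℝ) (x : Fin n → ℝ) (S : Set (Fin n → ℝ)) :
    ℝ≥0∞ :=
  ⨅ s ∈ S, ENNReal.ofReal (nrm (x - s))

/-- The distance `max {‖c₁-c₂‖_*, ‖β₁-β₂‖_∞}` in a parameter space `ℝⁿ × ℝ^ι`. -/
noncomputable def pDist (nrm : (Fin n → ℝ) → ℝ) {ι : Type} [Fintype ι]
    (p q : (Fin n → ℝ) × (ι → ℝ)) : ℝ :=
  max (dualNrm nrm (p.1 - q.1)) ‖p.2 - q.2‖

/-- The Aubin property of a set-valued mapping `G` at `(pbar, xbar)`, where the parameter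
space carries the distance `pd` and `ℝⁿ` the norm `nrm`. -/
def AubinAt {P : Type*} [TopologicalSpace P] (nrm : (Fin n → ℝ) → ℝ) (pd : P → P → ℝ)
    (G : P → Set (Fin n → ℝ)) (pbar : P) (xbar : Fin n → ℝ) : Prop :=
  ∃ κ : ℝ, 0 ≤ κ ∧ ∃ V ∈ 𝓝 pbar, ∃ U ∈ 𝓝 xbar,
    ∀ p1 ∈ V, ∀ p2 ∈ V, ∀ x2 ∈ G p2 ∩ U,
      dSet nrm x2 (G p1) ≤ ENNReal.ofReal (κ * pd p2 p1)

/-- The Lipschitz modulus of `G` at `(pbar, xbar)`: the infimum in `[0,+∞]` of all Lipschitz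
constants `κ` in the definition of the Aubin property (`+∞` if the Aubin property fails). -/
noncomputable def lipMod {P : Type*} [TopologicalSpace P] (nrm : (Fin n → ℝ) → ℝ)
    (pd : P → P → ℝ) (G : P → Set (Fin n → ℝ)) (pbar : P) (xbar : Fin n → ℝ) : ℝ≥0∞ :=
  ⨅ κ ∈ {κ : ℝ | 0 ≤ κ ∧ ∃ V ∈ 𝓝 pbar, ∃ U ∈ 𝓝 xbar,
    ∀ p1 ∈ V, ∀ p2 ∈ V, ∀ x2 ∈ G p2 ∩ U,
      dSet nrm x2 (G p1) ≤ ENNReal.ofReal (κ * pd p2 p1)}, ENNReal.ofReal κ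

/-- Strong Lipschitz stability of `G` at `pbar`: single-valuedness in a neighborhood of
`pbar` together with Lipschitz continuity there. -/
def StrongLipStable {P : Type*} [TopologicalSpace P] (nrm : (Fin n → ℝ) → ℝ)
    (pd : P → P → ℝ) (G : P → Set (Fin n → ℝ)) (pbar : P) : Prop :=
  ∃ V ∈ 𝓝 pbar, (∀ p ∈ V, ∃! x, x ∈ G p) ∧
    ∃ κ : ℝ, 0 ≤ κ ∧ ∀ p1 ∈ V, ∀ p2 ∈ V, ∀ x1 ∈ G p1, ∀ x2 ∈ G p2,
      nrm (x1 - x2) ≤ κ * pd p1 p2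

/-- The matrix `(I_n | 0_{n×|D|})`. -/
noncomputable def projMat (n : ℕ) {m : ℕ} (D : Finset (Fin m)) :
    Matrix (Fin n) (Fin n ⊕ D) ℝ :=
  Matrix.fromCols 1 0

/-- Operator norm of a matrix from `(ℝ^ι, ‖·‖_∞)` to `(ℝⁿ, nrm)`. -/
noncomputable def opNormInf (nrm : (Fin n → ℝ) → ℝ) {ι : Type} [Fintype ι]
    (B : Matrix (Fin n) ι ℝ) : ℝ :=
  sSup {r | ∃ v : ι → ℝ, ‖v‖ ≤ 1 ∧ r = nrm (B.mulVec v)}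

/-- Operator norm of a matrix from `(ℝⁿ × ℝ^ι, max {‖·‖_*, ‖·‖_∞})` to `(ℝⁿ, nrm)`. -/
noncomputable def opNormMixed (nrm : (Fin n → ℝ) → ℝ) {ι : Type} [Fintype ι]
    (B : Matrix (Fin n) (Fin n ⊕ ι) ℝ) : ℝ :=
  sSup {r | ∃ (α : Fin n → ℝ) (β : ι → ℝ), dualNrm nrm α ≤ 1 ∧ ‖β‖ ≤ 1 ∧
    r = nrm (B.mulVec (Sum.elim α β))}


/-- The matrix `A_Dᵀ (A_D A_Dᵀ)⁻¹`, which is the two-sided inverse of `A_D` whenever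
`A_D` is square and invertible. -/
noncomputable def pinvA (A : Matrix (Fin m) (Fin n) ℝ) (D : Finset (Fin m)) :
    Matrix (Fin n) D ℝ :=
  (subA A D)ᵀ * ((subA A D) * (subA A D)ᵀ)⁻¹

end QPLip

open QPLip

/-!
Lift a parameter `(c, β)` of the subproblem `P_D` to the parameter `(c, b')` of the full
problem with `b'ᵢ = βᵢ` on `D` and `b'ᵢ = b̄ᵢ + ε/2` off `D`. Near `x̄` the constraints off `D`
are then inactive, so solutions of `P_D(c, β)` near `x̄` solve the lifted problem, and solutions
of the lifted problem near `x̄` are local, hence by convexity global, minimizers of `P_D(c, β)`.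
Since the lifting does not increase parameter distances, every Lipschitz constant witnessing
the Aubin property of `S` at `((c̄, b̄), x̄)` also witnesses that of `S_D` at `((c̄, b̄_D), x̄)`.
-/

namespace QPLip

variable {n m : ℕ} {nrm : (Fin n → ℝ) → ℝ}

namespace IsNorm

lemma map_zero (h : IsNorm nrm) : nrm 0 = 0 := by
  simpa using h.smul 0 0

lemma map_neg (h : IsNorm nrm) (x : Fin n → ℝ) : nrm (-x) = nrm x := by
  simpa using h.smul (-1) x

lemma nonneg (h : IsNorm nrm) (x : Fin n → ℝ) : 0 ≤ nrm x := by
  have := h.triangle x (-x)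
  rw [add_neg_cancel, h.map_zero, h.map_neg] at this
  linarith

lemma map_sub_comm (h : IsNorm nrm) (x y : Fin n → ℝ) : nrm (x - y) = nrm (y - x) := by
  rw [← h.map_neg, neg_sub]

lemma map_sum_le (h : IsNorm nrm) {ι : Type*} (s : Finset ι) (f : ι → Fin n → ℝ) :
    nrm (∑ i ∈ s, f i) ≤ ∑ i ∈ s, nrm (f i) :=
  Finset.le_sum_of_subadditive nrm h.map_zero.le h.triangle s f

lemma exists_le_mul_norm (h : IsNorm nrm) : ∃ K, 0 ≤ K ∧ ∀ x, nrm x ≤ K * ‖x‖ := by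
  refine ⟨∑ i, nrm (Pi.single i 1), Finset.sum_nonneg fun i _ => h.nonneg _, fun x => ?_⟩
  calc nrm x = nrm (∑ i, x i • Pi.single i 1) := by
        congr 1; ext j; simp [Finset.sum_apply, Pi.single_apply]
    _ ≤ ∑ i, |x i| * nrm (Pi.single i 1) :=
        (h.map_sum_le _ _).trans_eq (Finset.sum_congr rfl fun i _ => h.smul _ _)
    _ ≤ ∑ i, ‖x‖ * nrm (Pi.single i 1) := by
        gcongr with i
        · exact h.nonneg _
        · exact norm_le_pi_norm x i
    _ = (∑ i, nrm (Pi.single i 1)) * ‖x‖ := by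
        rw [Finset.sum_mul]; exact Finset.sum_congr rfl fun i _ => mul_comm _ _

lemma continuous (h : IsNorm nrm) : Continuous nrm := by
  obtain ⟨K, hK, hle⟩ := h.exists_le_mul_norm
  refine (LipschitzWith.of_dist_le_mul (K := K.toNNReal) fun x y => ?_).continuous
  have hxy := h.triangle y (x - y)
  have hyx := h.triangle x (y - x)
  rw [add_sub_cancel] at hxy hyx
  rw [Real.dist_eq, dist_eq_norm, abs_le, Real.coe_toNNReal _ hK]
  rw [h.map_sub_comm y x] at hyx
  constructor <;> linarith [hle (x - y)]

lemma exists_pos_mul_norm_le (h : IsNorm nrm) : ∃ c > 0, ∀ x, c * ‖x‖ ≤ nrm x := by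
  rcases isEmpty_or_nonempty (Fin n) with hn | hn
  · exact ⟨1, one_pos, fun x => by simpa [Subsingleton.elim x 0] using h.nonneg 0⟩
  obtain ⟨x₀, hx₀, hmin⟩ := (isCompact_sphere (0 : Fin n → ℝ) 1).exists_isMinOn
    (NormedSpace.sphere_nonempty.2 zero_le_one) h.continuous.continuousOn
  have hx₀ne : x₀ ≠ 0 := ne_zero_of_mem_unit_sphere ⟨x₀, hx₀⟩
  refine ⟨nrm x₀, (h.nonneg x₀).lt_of_ne fun e => hx₀ne (h.definite x₀ e.symm), fun x => ?_⟩
  rcases eq_or_ne x 0 with rfl | hx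
  · simp [h.map_zero]
  have hu : ‖x‖⁻¹ • x ∈ Metric.sphere (0 : Fin n → ℝ) 1 := by
    simp [norm_smul, hx]
  calc nrm x₀ * ‖x‖ ≤ nrm (‖x‖⁻¹ • x) * ‖x‖ := by gcongr; exact hmin hu
    _ = nrm x := by
      rw [h.smul, abs_of_nonneg (by positivity), inv_mul_eq_div, div_mul_cancel₀]
      exact norm_ne_zero_iff.2 hx

end IsNorm

lemma abs_dotProduct_le {ι : Type*} [Fintype ι] (v w : ι → ℝ) :
    |v ⬝ᵥ w| ≤ Fintype.card ι * (‖v‖ * ‖w‖) := by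
  calc |v ⬝ᵥ w| ≤ ∑ i, |v i| * |w i| := by
        simpa only [dotProduct, abs_mul] using
          Finset.abs_sum_le_sum_abs (fun i => v i * w i) Finset.univ
    _ ≤ ∑ _i : ι, ‖v‖ * ‖w‖ := by
        gcongr with i
        · exact norm_le_pi_norm v i
        · exact norm_le_pi_norm w i
    _ = Fintype.card ι * (‖v‖ * ‖w‖) := by simp

lemma IsNorm.exists_dualNrm_le_mul_norm (h : IsNorm nrm) :
    ∃ K, 0 ≤ K ∧ ∀ v, dualNrm nrm v ≤ K * ‖v‖ := by
  obtain ⟨c, hc, hle⟩ := h.exists_pos_mul_norm_le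
  refine ⟨(n : ℝ) / c, by positivity, fun v => Real.sSup_le ?_ (by positivity)⟩
  rintro r ⟨y, hy, rfl⟩
  have hy' : ‖y‖ ≤ 1 / c := by rw [le_div_iff₀ hc]; linarith [hle y]
  calc |v ⬝ᵥ y| ≤ n * (‖v‖ * ‖y‖) := by simpa using abs_dotProduct_le v y
    _ ≤ n * (‖v‖ * (1 / c)) := by gcongr
    _ = n / c * ‖v‖ := by ring

lemma IsNorm.exists_mem_nhds_pDist_lt (h : IsNorm nrm) {ι : Type} [Fintype ι]
    (pbar : (Fin n → ℝ) × (ι → ℝ)) {η : ℝ} (hη : 0 < η) :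
    ∃ V ∈ 𝓝 pbar, ∀ p ∈ V, ∀ q ∈ V, pDist nrm p q < η := by
  obtain ⟨K, hK, hle⟩ := h.exists_dualNrm_le_mul_norm
  refine ⟨Metric.ball pbar (η / (2 * (K + 1))), Metric.ball_mem_nhds _ (by positivity),
    fun p hp q hq => ?_⟩
  have hpq : dist p q < η / (K + 1) := by
    calc dist p q ≤ dist p pbar + dist q pbar := dist_triangle_right _ _ _
      _ < η / (2 * (K + 1)) + η / (2 * (K + 1)) := add_lt_add hp hq
      _ = η / (K + 1) := by field_simp; ring
  have h₁ : ‖p.1 - q.1‖ ≤ dist p q := (norm_fst_le (p - q)).trans_eq (dist_eq_norm p q).symm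
  have h₂ : ‖p.2 - q.2‖ ≤ dist p q := (norm_snd_le (p - q)).trans_eq (dist_eq_norm p q).symm
  calc pDist nrm p q ≤ (K + 1) * dist p q := by
        refine max_le ((hle _).trans ?_) (h₂.trans ?_) <;> nlinarith [dist_nonneg (x := p) (y := q)]
    _ < (K + 1) * (η / (K + 1)) := by gcongr
    _ = η := by field_simp

lemma IsNorm.exists_mem_nhds_lt_imp_mem (h : IsNorm nrm) {xb : Fin n → ℝ}
    {W : Set (Fin n → ℝ)} (hW : W ∈ 𝓝 xb) :
    ∃ η > 0, ∃ U ∈ 𝓝 xb, ∀ x ∈ U, ∀ z, nrm (x - z) < η → z ∈ W := by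
  obtain ⟨c, hc, hle⟩ := h.exists_pos_mul_norm_le
  obtain ⟨δ, hδ, hball⟩ := Metric.mem_nhds_iff.1 hW
  refine ⟨c * δ / 2, by positivity, Metric.ball xb (δ / 2), Metric.ball_mem_nhds _ (by positivity),
    fun x hx z hz => hball ?_⟩
  have hxz : dist x z < δ / 2 := by
    rw [dist_eq_norm]; nlinarith [hle (x - z)]
  calc dist z xb ≤ dist x z + dist x xb := dist_triangle_left z xb x
    _ < δ := by rw [Metric.mem_ball] at hx; linarith

lemma dSet_le_dSet_of_lt_imp_mem {x : Fin n → ℝ} {T T' : Set (Fin n → ℝ)} {η : ℝ}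
    (hT : ∀ z ∈ T, nrm (x - z) < η → z ∈ T') (h : dSet nrm x T < ENNReal.ofReal η) :
    dSet nrm x T' ≤ dSet nrm x T := by
  have hnear : ∀ z ∈ T, nrm (x - z) < η → dSet nrm x T' ≤ ENNReal.ofReal (nrm (x - z)) :=
    fun z hz hlt => iInf₂_le z (hT z hz hlt)
  obtain ⟨z₀, hz₀, hlt₀⟩ : ∃ z₀ ∈ T, ENNReal.ofReal (nrm (x - z₀)) < ENNReal.ofReal η := by
    simpa only [dSet, iInf_lt_iff, exists_prop] using h
  refine le_iInf₂ fun z hz => ?_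
  by_cases hlt : nrm (x - z) < η
  · exact hnear z hz hlt
  · calc dSet nrm x T' ≤ ENNReal.ofReal (nrm (x - z₀)) :=
          hnear z₀ hz₀ (ENNReal.ofReal_lt_ofReal_iff'.1 hlt₀).1
      _ ≤ ENNReal.ofReal (nrm (x - z)) := hlt₀.le.trans (ENNReal.ofReal_le_ofReal (not_lt.1 hlt))

lemma convexOn_obj {Q : Matrix (Fin n) (Fin n) ℝ} (hQ : Q.PosSemidef) (c : Fin n → ℝ) :
    ConvexOn ℝ univ (obj Q c) := by
  refine ⟨convex_univ, fun x _ y _ a b ha hb hab => ?_⟩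
  have hsym : y ⬝ᵥ Q *ᵥ x = x ⬝ᵥ Q *ᵥ y := by
    rw [dotProduct_comm, ← vecMul_transpose, ← dotProduct_mulVec,
      ← conjTranspose_eq_transpose_of_trivial, hQ.1.eq]
  have hpsd : 0 ≤ (x - y) ⬝ᵥ Q *ᵥ (x - y) := by simpa using hQ.dotProduct_mulVec_nonneg (x - y)
  obtain rfl : b = 1 - a := by linarith
  simp only [obj, smul_eq_mul, mulVec_add, mulVec_smul, mulVec_sub, dotProduct_add,
    add_dotProduct, dotProduct_smul, smul_dotProduct, dotProduct_sub, sub_dotProduct, hsym]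
    at hpsd ⊢
  nlinarith [mul_nonneg (mul_nonneg ha hb) hpsd]

lemma convex_feasD (A : Matrix (Fin m) (Fin n) ℝ) (D : Finset (Fin m)) (β : D → ℝ) :
    Convex ℝ (FeasD A D β) := by
  simp only [FeasD, ofPred_forall]
  exact convex_iInter fun i => convex_halfSpace_le
    ⟨dotProduct_add (A i), fun t x => dotProduct_smul t (A i) x⟩ _

def extendRhs (b : Fin m → ℝ) (D : Finset (Fin m)) (β : D → ℝ) : Fin m → ℝ :=
  fun i => if h : i ∈ D then β ⟨i, h⟩ else b i

section extendRhs

variable {A : Matrix (Fin m) (Fin n) ℝ} {b : Fin m → ℝ} {D : Finset (Fin m)} {β : D → ℝ}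
  {x : Fin n → ℝ}

lemma mem_feas_extendRhs :
    x ∈ Feas A (extendRhs b D β) ↔ x ∈ FeasD A D β ∧ ∀ i ∉ D, A i ⬝ᵥ x ≤ b i := by
  refine ⟨fun hx => ⟨fun i => ?_, fun i hi => ?_⟩, fun ⟨hD, hb⟩ i => ?_⟩
  · simpa [extendRhs, i.2] using hx i
  · simpa [extendRhs, hi] using hx i
  · unfold extendRhs
    split_ifs with hi
    exacts [hD ⟨i, hi⟩, hb i hi]

lemma dist_extendRhs_le (β' : D → ℝ) : dist (extendRhs b D β) (extendRhs b D β') ≤ dist β β' := by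
  refine (dist_pi_le_iff dist_nonneg).2 fun i => ?_
  unfold extendRhs
  split_ifs with hi
  · exact dist_le_pi_dist β β' ⟨i, hi⟩
  · simp

lemma pDist_extendRhs_le (c c' : Fin n → ℝ) (β' : D → ℝ) :
    pDist nrm (c, extendRhs b D β) (c', extendRhs b D β') ≤ pDist nrm (c, β) (c', β') :=
  max_le_max le_rfl (by simpa only [dist_eq_norm] using dist_extendRhs_le β')

lemma dist_extendRhs_add_lt {ρ : ℝ} (hρ : 0 < ρ) {c c' : Fin n → ℝ}
    (h : dist (c, β) (c', restr b D) < ρ) :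
    dist (c, extendRhs (fun i => b i + ρ) D β) (c', b) < 2 * ρ := by
  have hb : dist (extendRhs (fun i => b i + ρ) D (restr b D)) b ≤ ρ := by
    refine (dist_pi_le_iff hρ.le).2 fun i => ?_
    unfold extendRhs restr
    split_ifs <;> simp [abs_of_pos hρ, hρ.le]
  rw [Prod.dist_eq] at h ⊢
  calc max (dist c c') (dist (extendRhs (fun i => b i + ρ) D β) b)
      ≤ max (dist c c') (dist β (restr b D) + ρ) :=
        max_le_max le_rfl ((dist_triangle _ _ _).trans (add_le_add (dist_extendRhs_le _) hb))
    _ < 2 * ρ := max_lt (by linarith [le_max_left (dist c c') (dist β (restr b D))])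
        (by linarith [le_max_right (dist c c') (dist β (restr b D))])

lemma strictFeasOff_mem_nhds (A : Matrix (Fin m) (Fin n) ℝ) (hx : ∀ i ∉ D, A i ⬝ᵥ x < b i) :
    {y | ∀ i ∉ D, A i ⬝ᵥ y < b i} ∈ 𝓝 x :=
  Filter.eventually_all.2 fun i => Filter.eventually_imp_distrib_left.2 fun hi =>
    (continuous_const.dotProduct continuous_id).continuousAt.eventually_lt continuousAt_const
      (hx i hi)

variable {Q : Matrix (Fin n) (Fin n) ℝ} {c : Fin n → ℝ}

lemma mem_argminSet_extendRhs (hx : x ∈ argminD Q A D c β) (hb : ∀ i ∉ D, A i ⬝ᵥ x ≤ b i) :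
    x ∈ argminSet Q A c (extendRhs b D β) :=
  ⟨mem_feas_extendRhs.2 ⟨hx.1, hb⟩, fun y hy => hx.2 y (mem_feas_extendRhs.1 hy).1⟩

lemma mem_argminD_of_mem_argminSet_extendRhs (hQ : Q.PosSemidef)
    (hx : x ∈ argminSet Q A c (extendRhs b D β)) (hb : ∀ i ∉ D, A i ⬝ᵥ x < b i) :
    x ∈ argminD Q A D c β := by
  have hxD : x ∈ FeasD A D β := (mem_feas_extendRhs.1 hx.1).1
  have hloc : IsLocalMinOn (obj Q c) (FeasD A D β) x := by
    filter_upwards [nhdsWithin_le_nhds (strictFeasOff_mem_nhds A hb), self_mem_nhdsWithin]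
      with y hyb hyD
    exact hx.2 y (mem_feas_extendRhs.2 ⟨hyD, fun i hi => (hyb i hi).le⟩)
  have hmin : IsMinOn (obj Q c) (FeasD A D β) x := IsMinOn.of_isLocalMinOn_of_convexOn hxD hloc
    ((convexOn_obj hQ c).subset (subset_univ _) (convex_feasD A D β))
  exact ⟨hxD, fun y hy => hmin hy⟩

end extendRhs

section Aubin

variable {P P' : Type*} [TopologicalSpace P] [TopologicalSpace P']

def IsAubinConst (nrm : (Fin n → ℝ) → ℝ) (pd : P → P → ℝ) (G : P → Set (Fin n → ℝ))
    (pbar : P) (xbar : Fin n → ℝ) (κ : ℝ) : Prop :=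
  0 ≤ κ ∧ ∃ V ∈ 𝓝 pbar, ∃ U ∈ 𝓝 xbar,
    ∀ p1 ∈ V, ∀ p2 ∈ V, ∀ x2 ∈ G p2 ∩ U, dSet nrm x2 (G p1) ≤ ENNReal.ofReal (κ * pd p2 p1)

variable {pd : P → P → ℝ} {G : P → Set (Fin n → ℝ)} {pbar : P} {xbar : Fin n → ℝ}
  {pd' : P' → P' → ℝ} {G' : P' → Set (Fin n → ℝ)} {pbar' : P'} {xbar' : Fin n → ℝ}

lemma lipMod_le_of_isAubinConst_imp
    (h : ∀ κ, IsAubinConst nrm pd G pbar xbar κ → IsAubinConst nrm pd' G' pbar' xbar' κ) :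
    lipMod nrm pd' G' pbar' xbar' ≤ lipMod nrm pd G pbar xbar :=
  le_iInf₂ fun κ hκ => iInf₂_le κ (h κ hκ)

lemma AubinAt.of_isAubinConst_imp
    (h : ∀ κ, IsAubinConst nrm pd G pbar xbar κ → IsAubinConst nrm pd' G' pbar' xbar' κ)
    (hG : AubinAt nrm pd G pbar xbar) : AubinAt nrm pd' G' pbar' xbar' :=
  let ⟨κ, hκ⟩ := hG
  ⟨κ, h κ hκ⟩

end Aubin

theorem isAubinConst_argminD_of_argminSet (hnrm : IsNorm nrm) {Q : Matrix (Fin n) (Fin n) ℝ}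
    (hQ : Q.PosSemidef) {A : Matrix (Fin m) (Fin n) ℝ} {cb : Fin n → ℝ} {bb : Fin m → ℝ}
    {xb : Fin n → ℝ} (hxb : xb ∈ Feas A bb) (D : Finset (Fin m)) {κ : ℝ}
    (h : IsAubinConst nrm (pDist nrm)
      (fun p : (Fin n → ℝ) × (Fin m → ℝ) => argminSet Q A p.1 p.2) (cb, bb) xb κ) :
    IsAubinConst nrm (pDist nrm)
      (fun p : (Fin n → ℝ) × (D → ℝ) => argminD Q A D p.1 p.2) (cb, restr bb D) xb κ := by
  obtain ⟨hκ, V, hV, U, hU, hS⟩ := h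
  obtain ⟨ε, hε, hεV⟩ := Metric.mem_nhds_iff.1 hV
  set b' : Fin m → ℝ := fun i => bb i + ε / 2
  set lift : (Fin n → ℝ) × (D → ℝ) → (Fin n → ℝ) × (Fin m → ℝ) :=
    fun p => (p.1, extendRhs b' D p.2)
  have hlift : ∀ p ∈ Metric.ball (cb, restr bb D) (ε / 2), lift p ∈ V := fun p hp =>
    hεV <| (dist_extendRhs_add_lt (half_pos hε) hp).trans_eq (mul_div_cancel₀ ε two_ne_zero)
  set W := {y | ∀ i ∉ D, A i ⬝ᵥ y < b' i}
  have hW : W ∈ 𝓝 xb := strictFeasOff_mem_nhds A fun i _ => by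
    show A i ⬝ᵥ xb < bb i + ε / 2
    linarith [hxb i]
  obtain ⟨η, hη, U₀, hU₀, hU₀W⟩ := hnrm.exists_mem_nhds_lt_imp_mem hW
  obtain ⟨V₀, hV₀, hV₀η⟩ :=
    hnrm.exists_mem_nhds_pDist_lt (cb, restr bb D) (η := η / (κ + 1)) (by positivity)
  refine ⟨hκ, Metric.ball (cb, restr bb D) (ε / 2) ∩ V₀,
    inter_mem (Metric.ball_mem_nhds _ (by positivity)) hV₀, U ∩ W ∩ U₀,
    inter_mem (inter_mem hU hW) hU₀, ?_⟩
  rintro p₁ ⟨hp₁, hp₁'⟩ p₂ ⟨hp₂, hp₂'⟩ x ⟨hx, ⟨hxU, hxW⟩, hxU₀⟩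
  have hxS : x ∈ argminSet Q A (lift p₂).1 (lift p₂).2 :=
    mem_argminSet_extendRhs hx fun i hi => (hxW i hi).le
  have hdist : dSet nrm x (argminSet Q A (lift p₁).1 (lift p₁).2) ≤
      ENNReal.ofReal (κ * pDist nrm p₂ p₁) :=
    (hS _ (hlift p₁ hp₁) _ (hlift p₂ hp₂) x ⟨hxS, hxU⟩).trans <| ENNReal.ofReal_le_ofReal <|
      mul_le_mul_of_nonneg_left (pDist_extendRhs_le _ _ _) hκ
  have hsmall : κ * pDist nrm p₂ p₁ < η :=
    calc κ * pDist nrm p₂ p₁ ≤ κ * (η / (κ + 1)) :=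
          mul_le_mul_of_nonneg_left (hV₀η _ hp₂' _ hp₁').le hκ
      _ < η := by rw [mul_div_assoc', div_lt_iff₀ (by positivity)]; nlinarith
  calc dSet nrm x (argminD Q A D p₁.1 p₁.2)
      ≤ dSet nrm x (argminSet Q A (lift p₁).1 (lift p₁).2) :=
        dSet_le_dSet_of_lt_imp_mem
          (fun z hz hxz => mem_argminD_of_mem_argminSet_extendRhs hQ hz (hU₀W x hxU₀ z hxz))
          (hdist.trans_lt ((ENNReal.ofReal_lt_ofReal_iff hη).2 hsmall))
    _ ≤ ENNReal.ofReal (κ * pDist nrm p₂ p₁) := hdist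

end QPLip

theorem statement6_general {n m : ℕ}
    (nrm : (Fin n → ℝ) → ℝ) (hnrm : IsNorm nrm)
    (Q : Matrix (Fin n) (Fin n) ℝ) (hQ : Q.PosSemidef)
    (A : Matrix (Fin m) (Fin n) ℝ) (cb : Fin n → ℝ) (bb : Fin m → ℝ) (xb : Fin n → ℝ)
    (hx : xb ∈ argminSet Q A cb bb) :
    (∀ D ∈ MinKKT Q A cb bb xb,
      lipMod nrm (fun p q => pDist nrm p q) (fun p : (Fin n → ℝ) × (D → ℝ) => argminD Q A D p.1 p.2) (cb, restr bb D) xb ≤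
        lipMod nrm (fun p q => pDist nrm p q) (fun p : (Fin n → ℝ) × (Fin m → ℝ) => argminSet Q A p.1 p.2) (cb, bb) xb) ∧
    (⨆ D ∈ MinKKT Q A cb bb xb, lipMod nrm (fun p q => pDist nrm p q) (fun p : (Fin n → ℝ) × (D → ℝ) => argminD Q A D p.1 p.2) (cb, restr bb D) xb) ≤
      lipMod nrm (fun p q => pDist nrm p q) (fun p : (Fin n → ℝ) × (Fin m → ℝ) => argminSet Q A p.1 p.2) (cb, bb) xb ∧
    (∀ D ∈ MinKKT Q A cb bb xb,
      ¬ AubinAt nrm (fun p q => pDist nrm p q) (fun p : (Fin n → ℝ) × (D → ℝ) => argminD Q A D p.1 p.2) (cb, restr bb D) xb →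
        ¬ AubinAt nrm (fun p q => pDist nrm p q) (fun p : (Fin n → ℝ) × (Fin m → ℝ) => argminSet Q A p.1 p.2) (cb, bb) xb) := by
  have key (D : Finset (Fin m)) (κ : ℝ) :=
    isAubinConst_argminD_of_argminSet (cb := cb) (κ := κ) hnrm hQ hx.1 D
  exact ⟨fun D _ => lipMod_le_of_isAubinConst_imp (key D),
    iSup₂_le fun D _ => lipMod_le_of_isAubinConst_imp (key D),
    fun D _ hD hS => hD (hS.of_isAubinConst_imp (key D))⟩

/-- under SCQ at `b̄`, `lip S((c̄,b̄),x̄) ≥ lip S_D((c̄,b̄_D),x̄)` for every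
`D ∈ M_{c̄,b̄}(x̄)`; in particular `lip S ≥ max_D lip S_D`, and if some `S_D` fails the
Aubin property then so does `S`. -/
theorem statement6 {n m : ℕ} (hn : 0 < n) (hm : 0 < m)
    (nrm : (Fin n → ℝ) → ℝ) (hnrm : IsNorm nrm)
    (Q : Matrix (Fin n) (Fin n) ℝ) (hQ : Q.PosSemidef)
    (A : Matrix (Fin m) (Fin n) ℝ) (cb : Fin n → ℝ) (bb : Fin m → ℝ) (xb : Fin n → ℝ)
    (hx : xb ∈ argminSet Q A cb bb) (hSl : Slater A bb) :
    (∀ D ∈ MinKKT Q A cb bb xb,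
      lipMod nrm (fun p q => pDist nrm p q) (fun p : (Fin n → ℝ) × (D → ℝ) => argminD Q A D p.1 p.2) (cb, restr bb D) xb ≤
        lipMod nrm (fun p q => pDist nrm p q) (fun p : (Fin n → ℝ) × (Fin m → ℝ) => argminSet Q A p.1 p.2) (cb, bb) xb) ∧
    (⨆ D ∈ MinKKT Q A cb bb xb, lipMod nrm (fun p q => pDist nrm p q) (fun p : (Fin n → ℝ) × (D → ℝ) => argminD Q A D p.1 p.2) (cb, restr bb D) xb) ≤
      lipMod nrm (fun p q => pDist nrm p q) (fun p : (Fin n → ℝ) × (Fin m → ℝ) => argminSet Q A p.1 p.2) (cb, bb) xb ∧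
    (∀ D ∈ MinKKT Q A cb bb xb,
      ¬ AubinAt nrm (fun p q => pDist nrm p q) (fun p : (Fin n → ℝ) × (D → ℝ) => argminD Q A D p.1 p.2) (cb, restr bb D) xb →
        ¬ AubinAt nrm (fun p q => pDist nrm p q) (fun p : (Fin n → ℝ) × (Fin m → ℝ) => argminSet Q A p.1 p.2) (cb, bb) xb) :=
  statement6_general nrm hnrm Q hQ A cb bb xb hx
end

section
/- Let ((c̄,b̄),x̄) be in the graph of the argmin mapping S and assume 0_n ∉ conv{a_i : i ∈ I_{b̄}(x̄)}. Then for every D ∈ L_{c̄,b̄}(x̄) there exists a sequence {c^r}_{r∈ℕ} ⊂ ℝ^n converging to c̄ such that for every r, ((c^r, b̄), x̄) ∈ gph S and D ∈ M_{c^r, b̄}(x̄). Consequently, L_{c̄,b̄}(x̄) equals the Painlevé–Kuratowski upper limit of M_{c,b}(x) as ((c,b),x) → ((c̄,b̄),x̄) within gph S, where the limit is taken in the discrete space of subsets of {1,…,m}. -/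
open Matrix Set Topology Filter
open scoped ENNReal

open QPLip


/-!
Replacing `c̄` by `c̄ - ε • ∑_{i ∈ D} aᵢ` raises every KKT multiplier of `D` by `ε`, so all of
them become positive. Multipliers over a linearly independent family are unique, so no proper
subset of `D` carries `-(Qx̄ + c)`: `D` is a minimal KKT set, and `x̄` stays optimal since KKT
points of a convex quadratic program are minimizers.

Conversely, a minimal KKT set has linearly independent generators (the conic Carathéodory
reduction: a linear relation among them lets one multiplier be pushed to zero). The cone over a
linearly independent family is the image of the closed orthant under an injective linear map,
hence closed, so activity and the KKT inclusion survive in the limit.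
-/

namespace QPLip

variable {n m : ℕ}

lemma obj_sub_obj {Q : Matrix (Fin n) (Fin n) ℝ} (hQ : Q.IsSymm) (c x y : Fin n → ℝ) :
    obj Q c y - obj Q c x =
      (Q *ᵥ x + c) ⬝ᵥ (y - x) + 1 / 2 * ((y - x) ⬝ᵥ Q *ᵥ (y - x)) := by
  have hswap : y ⬝ᵥ Q *ᵥ x = x ⬝ᵥ Q *ᵥ y := by
    rw [dotProduct_mulVec, ← mulVec_transpose, hQ.eq, dotProduct_comm]
  simp only [obj, mulVec_sub, dotProduct_sub, sub_dotProduct, add_dotProduct]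
  rw [dotProduct_comm (Q *ᵥ x) y, dotProduct_comm (Q *ᵥ x) x]
  linarith

theorem mem_argminSet_of_mem_coneOf {Q : Matrix (Fin n) (Fin n) ℝ} (hQ : Q.PosSemidef)
    {A : Matrix (Fin m) (Fin n) ℝ} {c : Fin n → ℝ} {b : Fin m → ℝ} {x : Fin n → ℝ}
    (hx : x ∈ Feas A b) {D : Finset (Fin m)} (hD : ↑D ⊆ activeIdx A b x)
    (hcone : -(Q *ᵥ x + c) ∈ coneOf A D) : x ∈ argminSet Q A c b := by
  obtain ⟨lam, hlam, hv⟩ := hcone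
  refine ⟨hx, fun y hy => ?_⟩
  have hlin : 0 ≤ (Q *ᵥ x + c) ⬝ᵥ (y - x) := by
    have : (Q *ᵥ x + c) ⬝ᵥ (y - x) = ∑ i ∈ D, lam i * (b i - A i ⬝ᵥ y) := by
      rw [← neg_neg (Q *ᵥ x + c), hv, neg_dotProduct, sum_dotProduct, ← Finset.sum_neg_distrib]
      refine Finset.sum_congr rfl fun i hi => ?_
      rw [smul_dotProduct, dotProduct_sub, hD hi, smul_eq_mul]
      ring
    rw [this]
    exact Finset.sum_nonneg fun i _ => mul_nonneg (hlam i) (sub_nonneg.2 (hy i))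
  have hquad : 0 ≤ (y - x) ⬝ᵥ Q *ᵥ (y - x) := by
    simpa using hQ.dotProduct_mulVec_nonneg (y - x)
  have := obj_sub_obj (isHermitian_iff_isSymm.1 hQ.1) c x y
  linarith

lemma mem_coneOf_iff {A : Matrix (Fin m) (Fin n) ℝ} {D : Finset (Fin m)} {v : Fin n → ℝ} :
    v ∈ coneOf A D ↔ ∃ lam : Fin m → ℝ, (∀ i ∈ D, 0 ≤ lam i) ∧ v = ∑ i ∈ D, lam i • A i := by
  refine ⟨fun ⟨lam, hlam, hv⟩ => ⟨lam, fun i _ => hlam i, hv⟩, fun ⟨lam, hlam, hv⟩ => ?_⟩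
  refine ⟨fun i => max (lam i) 0, fun i => le_max_right _ _, hv.trans ?_⟩
  exact Finset.sum_congr rfl fun i hi => by simp only [max_eq_left (hlam i hi)]

lemma coneOf_eq_image (A : Matrix (Fin m) (Fin n) ℝ) (D : Finset (Fin m)) :
    coneOf A D = Fintype.linearCombination ℝ (fun i : D => A i.1) '' Set.Ici 0 := by
  classical
  ext v
  simp only [mem_coneOf_iff, Set.mem_image, Set.mem_Ici, Fintype.linearCombination_apply]
  constructor
  · rintro ⟨lam, hlam, rfl⟩
    exact ⟨fun i => lam i, fun i => hlam i i.2, Finset.sum_coe_sort D fun i => lam i • A i⟩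
  · rintro ⟨g, hg, rfl⟩
    refine ⟨fun i => if h : i ∈ D then g ⟨i, h⟩ else 0, fun i hi => by simpa [hi] using hg ⟨i, hi⟩,
      ?_⟩
    rw [← Finset.sum_coe_sort D]
    simp

lemma isClosed_coneOf {A : Matrix (Fin m) (Fin n) ℝ} {D : Finset (Fin m)}
    (hli : LinearIndependent ℝ (fun i : D => A i.1)) : IsClosed (coneOf A D) := by
  rw [coneOf_eq_image]
  exact (LinearMap.isClosedEmbedding_of_injective
    (LinearMap.ker_eq_bot.2 hli.fintypeLinearCombination_injective)).isClosedMap _ isClosed_Ici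

lemma notMem_coneOf_of_ssubset {A : Matrix (Fin m) (Fin n) ℝ} {D D' : Finset (Fin m)}
    (hli : LinearIndependent ℝ (fun i : D => A i.1)) {lam : Fin m → ℝ}
    (hpos : ∀ i ∈ D, 0 < lam i) (hD' : D' ⊂ D) : ∑ i ∈ D, lam i • A i ∉ coneOf A D' := by
  classical
  rintro ⟨mu, -, hmu⟩
  obtain ⟨j, hjD, hjD'⟩ := Finset.exists_of_ssubset hD'
  have hrel : ∑ i ∈ D, (lam i - if i ∈ D' then mu i else 0) • A i = 0 := by
    simp only [sub_smul, ite_smul, zero_smul, Finset.sum_sub_distrib, Finset.sum_ite_mem,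
      Finset.inter_eq_right.2 hD'.subset, ← hmu, sub_self]
  have hj := linearIndepOn_finset_iff.1 hli _ hrel j hjD
  rw [if_neg hjD', sub_zero] at hj
  exact (hpos j hjD).ne' hj

lemma exists_min_ratio {ι : Type*} {s : Finset ι} {lam g : ι → ℝ} (hlam : ∀ i ∈ s, 0 ≤ lam i)
    (hg : ∃ i ∈ s, 0 < g i) : ∃ t, ∃ i₀ ∈ s, lam i₀ = t * g i₀ ∧ ∀ i ∈ s, t * g i ≤ lam i := by
  classical
  obtain ⟨j, hj, hgj⟩ := hg
  obtain ⟨i₀, hi₀, hmin⟩ := (s.filter (0 < g ·)).exists_min_image (fun i => lam i / g i)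
    ⟨j, Finset.mem_filter.2 ⟨hj, hgj⟩⟩
  rw [Finset.mem_filter] at hi₀
  have ht : 0 ≤ lam i₀ / g i₀ := div_nonneg (hlam _ hi₀.1) hi₀.2.le
  refine ⟨lam i₀ / g i₀, i₀, hi₀.1, (div_mul_cancel₀ _ hi₀.2.ne').symm, fun i hi => ?_⟩
  rcases lt_or_ge 0 (g i) with hgi | hgi
  · exact (le_div_iff₀ hgi).1 (hmin i (Finset.mem_filter.2 ⟨hi, hgi⟩))
  · exact (mul_nonpos_of_nonneg_of_nonpos ht hgi).trans (hlam i hi)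

lemma exists_erase_mem_coneOf {A : Matrix (Fin m) (Fin n) ℝ} {D : Finset (Fin m)}
    {v : Fin n → ℝ} (hv : v ∈ coneOf A D) (hli : ¬LinearIndependent ℝ (fun i : D => A i.1)) :
    ∃ i ∈ D, v ∈ coneOf A (D.erase i) := by
  obtain ⟨lam, hlam, rfl⟩ := hv
  obtain ⟨g, hrel, hpos⟩ : ∃ g : Fin m → ℝ, ∑ i ∈ D, g i • A i = 0 ∧ ∃ i ∈ D, 0 < g i := by
    obtain ⟨g, hrel, j, hjD, hgj⟩ := not_linearIndepOn_finset_iff.1 hli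
    rcases hgj.lt_or_gt with hneg | hpos
    · exact ⟨-g, by simp [neg_smul, Finset.sum_neg_distrib, hrel], j, hjD, by simpa using hneg⟩
    · exact ⟨g, hrel, j, hjD, hpos⟩
  obtain ⟨t, i₀, hi₀, hzero, hle⟩ := exists_min_ratio (fun i _ => hlam i) hpos
  refine ⟨i₀, hi₀, mem_coneOf_iff.2 ⟨fun i => lam i - t * g i,
    fun i hi => sub_nonneg.2 (hle i (Finset.mem_of_mem_erase hi)), ?_⟩⟩
  rw [Finset.sum_erase _ (by simp [hzero])]
  simp only [sub_smul, Finset.sum_sub_distrib, mul_smul, ← Finset.smul_sum, hrel, smul_zero,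
    sub_zero]

lemma linearIndependent_of_minimal {A : Matrix (Fin m) (Fin n) ℝ} {D : Finset (Fin m)}
    {v : Fin n → ℝ} (hv : v ∈ coneOf A D) (hmin : ∀ D' ⊂ D, v ∉ coneOf A D') :
    LinearIndependent ℝ (fun i : D => A i.1) := by
  by_contra hli
  obtain ⟨i, hi, hvi⟩ := exists_erase_mem_coneOf hv hli
  exact hmin _ (Finset.erase_ssubset hi) hvi

theorem mem_minKKT_sub_smul_sum {Q : Matrix (Fin n) (Fin n) ℝ} (hQ : Q.PosSemidef)
    {A : Matrix (Fin m) (Fin n) ℝ} {c : Fin n → ℝ} {b : Fin m → ℝ} {x : Fin n → ℝ}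
    (hx : x ∈ Feas A b) {D : Finset (Fin m)} (hD : D ∈ ExtKKT Q A c b x) {ε : ℝ} (hε : 0 < ε) :
    x ∈ argminSet Q A (c - ε • ∑ i ∈ D, A i) b ∧
      D ∈ MinKKT Q A (c - ε • ∑ i ∈ D, A i) b x := by
  obtain ⟨hact, hli, lam, hlam, hv⟩ := hD
  have hv' : -(Q *ᵥ x + (c - ε • ∑ i ∈ D, A i)) = ∑ i ∈ D, (lam i + ε) • A i := by
    rw [Finset.sum_congr rfl fun i _ => add_smul (lam i) ε (A i), Finset.sum_add_distrib, ← hv]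
    have hsmul : ε • ∑ i ∈ D, A i = ∑ i ∈ D, ε • A i := Finset.smul_sum ..
    rw [hsmul]
    abel
  have hpos : ∀ i ∈ D, 0 < lam i + ε := fun i _ => by linarith [hlam i]
  have hcone : -(Q *ᵥ x + (c - ε • ∑ i ∈ D, A i)) ∈ coneOf A D :=
    ⟨fun i => lam i + ε, fun i => by linarith [hlam i], hv'⟩
  refine ⟨mem_argminSet_of_mem_coneOf hQ hx hact hcone, hact, hcone, fun D' hD' => ?_⟩
  rw [hv']
  exact notMem_coneOf_of_ssubset hli hpos hD'

theorem mem_extKKT_of_tendsto {ι : Type*} {l : Filter ι} [l.NeBot]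
    {Q : Matrix (Fin n) (Fin n) ℝ} {A : Matrix (Fin m) (Fin n) ℝ} {c : Fin n → ℝ}
    {b : Fin m → ℝ} {x : Fin n → ℝ} {D : Finset (Fin m)}
    {p : ι → (Fin n → ℝ) × (Fin m → ℝ)} {xs : ι → Fin n → ℝ}
    (hp : Tendsto p l (𝓝 (c, b))) (hxs : Tendsto xs l (𝓝 x))
    (hD : ∀ᶠ r in l, D ∈ MinKKT Q A (p r).1 (p r).2 (xs r)) : D ∈ ExtKKT Q A c b x := by
  obtain ⟨r, hr⟩ := hD.exists
  have hli := linearIndependent_of_minimal hr.2.1 hr.2.2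
  refine ⟨fun i hi => ?_, hli, ?_⟩
  · have hlhs : Tendsto (fun r => A i ⬝ᵥ xs r) l (𝓝 (A i ⬝ᵥ x)) :=
      ((continuous_const.dotProduct continuous_id).tendsto x).comp hxs
    have hrhs : Tendsto (fun r => A i ⬝ᵥ xs r) l (𝓝 (b i)) :=
      (((continuous_apply i).tendsto b).comp hp.snd_nhds).congr'
        (hD.mono fun r hr => (hr.1 hi).symm)
    exact tendsto_nhds_unique hlhs hrhs
  · have hlim : Tendsto (fun r => -(Q *ᵥ xs r + (p r).1)) l (𝓝 (-(Q *ᵥ x + c))) :=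
      ((((continuous_const.matrix_mulVec continuous_id).tendsto x).comp hxs).add
        hp.fst_nhds).neg
    exact (isClosed_coneOf hli).mem_of_tendsto hlim (hD.mono fun r hr => hr.2.1)

end QPLip

theorem statement9_general {n m : ℕ}
    (Q : Matrix (Fin n) (Fin n) ℝ) (hQ : Q.PosSemidef)
    (A : Matrix (Fin m) (Fin n) ℝ) (cb : Fin n → ℝ) (bb : Fin m → ℝ) (xb : Fin n → ℝ)
    (hx : xb ∈ argminSet Q A cb bb) :
    (∀ D ∈ ExtKKT Q A cb bb xb, ∃ cs : ℕ → (Fin n → ℝ),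
      Filter.Tendsto cs Filter.atTop (𝓝 cb) ∧
      ∀ r : ℕ, xb ∈ argminSet Q A (cs r) bb ∧ D ∈ MinKKT Q A (cs r) bb xb) ∧
    ExtKKT Q A cb bb xb =
      {D : Finset (Fin m) | ∃ (p : ℕ → (Fin n → ℝ) × (Fin m → ℝ)) (xs : ℕ → (Fin n → ℝ)),
        Filter.Tendsto p Filter.atTop (𝓝 (cb, bb)) ∧
        Filter.Tendsto xs Filter.atTop (𝓝 xb) ∧
        ∀ r : ℕ, xs r ∈ argminSet Q A (p r).1 (p r).2 ∧
          D ∈ MinKKT Q A (p r).1 (p r).2 (xs r)} := by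
  have approx : ∀ D ∈ ExtKKT Q A cb bb xb, ∃ cs : ℕ → (Fin n → ℝ), Tendsto cs atTop (𝓝 cb) ∧
      ∀ r : ℕ, xb ∈ argminSet Q A (cs r) bb ∧ D ∈ MinKKT Q A (cs r) bb xb := by
    intro D hD
    refine ⟨fun r => cb - (1 / ((r : ℝ) + 1)) • ∑ i ∈ D, A i, ?_,
      fun r => mem_minKKT_sub_smul_sum hQ hx.1 hD (by positivity)⟩
    simpa using tendsto_const_nhds.sub
      ((tendsto_one_div_add_atTop_nhds_zero_nat (𝕜 := ℝ)).smul_const (∑ i ∈ D, A i))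
  refine ⟨approx, Set.ext fun D => ⟨fun hD => ?_, ?_⟩⟩
  · obtain ⟨cs, hcs, hall⟩ := approx D hD
    exact ⟨fun r => (cs r, bb), fun _ => xb, hcs.prodMk_nhds tendsto_const_nhds,
      tendsto_const_nhds, hall⟩
  · rintro ⟨p, xs, hp, hxs, hall⟩
    exact mem_extKKT_of_tendsto hp hxs (.of_forall fun r => (hall r).2)

/-- if `0 ∉ conv{aᵢ : i ∈ I_{b̄}(x̄)}` then every `D ∈ L_{c̄,b̄}(x̄)` arises as
`D ∈ M_{c^r,b̄}(x̄)` for a sequence `c^r → c̄`, and `L_{c̄,b̄}(x̄)` equals the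
Painlevé–Kuratowski upper limit of `M_{c,b}(x)` along `gph S` at `((c̄,b̄),x̄)`. -/
theorem statement9 {n m : ℕ} (hn : 0 < n) (hm : 0 < m)
    (Q : Matrix (Fin n) (Fin n) ℝ) (hQ : Q.PosSemidef)
    (A : Matrix (Fin m) (Fin n) ℝ) (cb : Fin n → ℝ) (bb : Fin m → ℝ) (xb : Fin n → ℝ)
    (hx : xb ∈ argminSet Q A cb bb)
    (h0 : (0 : Fin n → ℝ) ∉ convexHull ℝ ((fun i => A i) '' activeIdx A bb xb)) :
    (∀ D ∈ ExtKKT Q A cb bb xb, ∃ cs : ℕ → (Fin n → ℝ),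
      Filter.Tendsto cs Filter.atTop (𝓝 cb) ∧
      ∀ r : ℕ, xb ∈ argminSet Q A (cs r) bb ∧ D ∈ MinKKT Q A (cs r) bb xb) ∧
    ExtKKT Q A cb bb xb =
      {D : Finset (Fin m) | ∃ (p : ℕ → (Fin n → ℝ) × (Fin m → ℝ)) (xs : ℕ → (Fin n → ℝ)),
        Filter.Tendsto p Filter.atTop (𝓝 (cb, bb)) ∧
        Filter.Tendsto xs Filter.atTop (𝓝 xb) ∧
        ∀ r : ℕ, xs r ∈ argminSet Q A (p r).1 (p r).2 ∧
          D ∈ MinKKT Q A (p r).1 (p r).2 (xs r)} :=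
  statement9_general Q hQ A cb bb xb hx
end

section
/- Let ((c̄,b̄),x̄) be in the graph of the argmin mapping S with 0_n ∉ conv{a_i : i ∈ I_{b̄}(x̄)}, and let V × U be an open neighborhood of ((c̄,b̄),x̄) such that M_{c,b}(x) ⊂ L_{c̄,b̄}(x̄) for all ((c,b),x) ∈ (V × U) ∩ gph S. Then also L_{c,b}(x) ⊂ L_{c̄,b̄}(x̄) for all ((c,b),x) ∈ (V × U) ∩ gph S. -/
open Matrix Set Topology Filter
open scoped ENNReal

open QPLip

/-!
Given `D ∈ L_{c,b}(x)` with multipliers `λ ≥ 0`, tilt the linear term to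
`c' = c - ε ∑_{i ∈ D} aᵢ`. The point `x` stays optimal for `(c', b)`, since KKT conditions are
sufficient for a convex quadratic program, now with multipliers `λ + ε > 0`. By linear
independence these are the only multipliers on `D`, so no proper subset of `D` carries a KKT
representation: `D ∈ M_{c',b}(x)`. For small `ε > 0` the tilted parameter stays in the open set
`V`, so the hypothesis gives `D ∈ L_{c̄,b̄}(x̄)`.
-/

theorem Matrix.IsSymm.dotProduct_mulVec_comm {ι R : Type*} [Fintype ι] [CommSemiring R]
    {Q : Matrix ι ι R} (hQ : Q.IsSymm) (u v : ι → R) : u ⬝ᵥ Q *ᵥ v = v ⬝ᵥ Q *ᵥ u := by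
  rw [dotProduct_mulVec, ← mulVec_transpose, hQ.eq, dotProduct_comm]

namespace QPLip

variable {n m : ℕ} {Q : Matrix (Fin n) (Fin n) ℝ} {A : Matrix (Fin m) (Fin n) ℝ}
  {b : Fin m → ℝ} {D : Finset (Fin m)}

theorem obj_add (hQ : Q.IsSymm) (c x d : Fin n → ℝ) :
    obj Q c (x + d) = obj Q c x + (Q *ᵥ x + c) ⬝ᵥ d + 1 / 2 * (d ⬝ᵥ Q *ᵥ d) := by
  have hxd : d ⬝ᵥ Q *ᵥ x = (Q *ᵥ x) ⬝ᵥ d := dotProduct_comm _ _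
  simp only [obj, mulVec_add, dotProduct_add, add_dotProduct, hQ.dotProduct_mulVec_comm x d, hxd]
  ring

theorem dotProduct_sub_nonpos_of_mem_coneOf {x y v : Fin n → ℝ} (hD : ↑D ⊆ activeIdx A b x)
    (hy : y ∈ Feas A b) (hv : v ∈ coneOf A D) : v ⬝ᵥ (y - x) ≤ 0 := by
  obtain ⟨lam, hlam, rfl⟩ := hv
  rw [sum_dotProduct]
  refine Finset.sum_nonpos fun i hi => ?_
  have hAi : A i ⬝ᵥ (y - x) ≤ 0 := by
    rw [dotProduct_sub, show A i ⬝ᵥ x = b i from hD hi]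
    linarith [hy i]
  rw [smul_dotProduct, smul_eq_mul]
  exact mul_nonpos_of_nonneg_of_nonpos (hlam i) hAi

theorem mem_argminSet_of_neg_grad_mem_coneOf (hQ : Q.PosSemidef) {c x : Fin n → ℝ}
    (hx : x ∈ Feas A b) (hD : ↑D ⊆ activeIdx A b x) (hKKT : -(Q *ᵥ x + c) ∈ coneOf A D) :
    x ∈ argminSet Q A c b := by
  refine ⟨hx, fun y hy => ?_⟩
  have hgrad : 0 ≤ (Q *ᵥ x + c) ⬝ᵥ (y - x) := by
    have h := dotProduct_sub_nonpos_of_mem_coneOf hD hy hKKT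
    rwa [neg_dotProduct, neg_nonpos] at h
  have hcurv : 0 ≤ (y - x) ⬝ᵥ Q *ᵥ (y - x) := by
    simpa using hQ.dotProduct_mulVec_nonneg (y - x)
  have hexp := obj_add (isHermitian_iff_isSymm.mp hQ.isHermitian) c x (y - x)
  rw [add_sub_cancel] at hexp
  linarith

theorem sum_smul_notMem_coneOf_of_ssubset {D' : Finset (Fin m)}
    (hind : LinearIndependent ℝ (fun i : D => A i.1)) {μ : Fin m → ℝ} (hμ : ∀ i ∈ D, 0 < μ i)
    (hD' : D' ⊂ D) : ∑ i ∈ D, μ i • A i ∉ coneOf A D' := by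
  rintro ⟨ν, -, hν⟩
  obtain ⟨j, hjD, hjD'⟩ := Finset.exists_of_ssubset hD'
  set ν' : Fin m → ℝ := fun i => if i ∈ D' then ν i else 0
  have hν' : ∑ i ∈ D', ν i • A i = ∑ i ∈ D, ν' i • A i := by
    simp only [ν', ite_smul, zero_smul, Finset.sum_ite_mem, Finset.inter_eq_right.mpr hD'.subset]
  have hzero : ∑ i : D, (μ i - ν' i) • A i = 0 := by
    rw [Finset.sum_coe_sort D fun i => (μ i - ν' i) • A i]
    simp only [sub_smul, Finset.sum_sub_distrib, hν, hν', sub_self]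
  have hμν := Fintype.linearIndependent_iff.mp hind _ hzero ⟨j, hjD⟩
  simp only [ν', hjD', if_false, sub_zero] at hμν
  linarith [hμ j hjD]

theorem mem_minKKT_sub_sum_smul_of_mem_extKKT {c x : Fin n → ℝ} (hD : D ∈ ExtKKT Q A c b x)
    {ε : ℝ} (hε : 0 < ε) : D ∈ MinKKT Q A (c - ∑ i ∈ D, ε • A i) b x := by
  obtain ⟨hact, hind, lam, hlam, hrep⟩ := hD
  have hrep' : -(Q *ᵥ x + (c - ∑ i ∈ D, ε • A i)) = ∑ i ∈ D, (lam i + ε) • A i := by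
    rw [show -(Q *ᵥ x + (c - ∑ i ∈ D, ε • A i)) = -(Q *ᵥ x + c) + ∑ i ∈ D, ε • A i by abel,
      hrep]
    simp only [add_smul, Finset.sum_add_distrib]
  have hpos : ∀ i, 0 < lam i + ε := fun i => by linarith [hlam i]
  refine ⟨hact, ⟨_, fun i => (hpos i).le, hrep'⟩, fun D' hD' => ?_⟩
  rw [hrep']
  exact sum_smul_notMem_coneOf_of_ssubset hind (fun i _ => hpos i) hD'

end QPLip

theorem statement10_general {n m : ℕ}
    (Q : Matrix (Fin n) (Fin n) ℝ) (hQ : Q.PosSemidef)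
    (A : Matrix (Fin m) (Fin n) ℝ) (cb : Fin n → ℝ) (bb : Fin m → ℝ) (xb : Fin n → ℝ)
    (V : Set ((Fin n → ℝ) × (Fin m → ℝ))) (U : Set (Fin n → ℝ))
    (hVopen : IsOpen V)
    (hML : ∀ (c : Fin n → ℝ) (b : Fin m → ℝ) (x : Fin n → ℝ),
      (c, b) ∈ V → x ∈ U → x ∈ argminSet Q A c b →
        MinKKT Q A c b x ⊆ ExtKKT Q A cb bb xb) :
    ∀ (c : Fin n → ℝ) (b : Fin m → ℝ) (x : Fin n → ℝ),
      (c, b) ∈ V → x ∈ U → x ∈ argminSet Q A c b →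
        ExtKKT Q A c b x ⊆ ExtKKT Q A cb bb xb := by
  intro c b x hcb hxU hxS D hD
  have htilt : Tendsto (fun t : ℝ => (c - ∑ i ∈ D, t • A i, b)) (𝓝[>] 0) (𝓝 (c, b)) := by
    refine tendsto_nhdsWithin_of_tendsto_nhds (Continuous.tendsto' ?_ _ _ (by simp))
    fun_prop
  obtain ⟨ε, hεV, hε⟩ :=
    ((htilt.eventually (hVopen.mem_nhds hcb)).and self_mem_nhdsWithin).exists
  have hmin := mem_minKKT_sub_sum_smul_of_mem_extKKT hD hε
  exact hML _ b x hεV hxU (mem_argminSet_of_neg_grad_mem_coneOf hQ hxS.1 hmin.1 hmin.2.1) hmin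

/-- if `V × U` is an open neighborhood of `((c̄,b̄),x̄)` on which
`M_{c,b}(x) ⊆ L_{c̄,b̄}(x̄)` holds along `gph S`, then also `L_{c,b}(x) ⊆ L_{c̄,b̄}(x̄)`
there. -/
theorem statement10 {n m : ℕ} (hn : 0 < n) (hm : 0 < m)
    (Q : Matrix (Fin n) (Fin n) ℝ) (hQ : Q.PosSemidef)
    (A : Matrix (Fin m) (Fin n) ℝ) (cb : Fin n → ℝ) (bb : Fin m → ℝ) (xb : Fin n → ℝ)
    (hx : xb ∈ argminSet Q A cb bb)
    (h0 : (0 : Fin n → ℝ) ∉ convexHull ℝ ((fun i => A i) '' activeIdx A bb xb))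
    (V : Set ((Fin n → ℝ) × (Fin m → ℝ))) (U : Set (Fin n → ℝ))
    (hVopen : IsOpen V) (hUopen : IsOpen U) (hVmem : (cb, bb) ∈ V) (hUmem : xb ∈ U)
    (hML : ∀ (c : Fin n → ℝ) (b : Fin m → ℝ) (x : Fin n → ℝ),
      (c, b) ∈ V → x ∈ U → x ∈ argminSet Q A c b →
        MinKKT Q A c b x ⊆ ExtKKT Q A cb bb xb) :
    ∀ (c : Fin n → ℝ) (b : Fin m → ℝ) (x : Fin n → ℝ),
      (c, b) ∈ V → x ∈ U → x ∈ argminSet Q A c b →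
        ExtKKT Q A c b x ⊆ ExtKKT Q A cb bb xb :=
  statement10_general Q hQ A cb bb xb V U hVopen hML
end
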